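/- If (RG)^- is anticommutative and the set G_* of *-fixed elements generates no nontrivial commutators (i.e., every pair of elements of G_* commutes), then G is abelian or G is an SLC-group with canonical involution *. -/

import Mathlib

open Finsupp

/-- The generalized oriented map σ* on the group ring RG. -/
noncomputable def sigmaStar {R : Type} [CommRing R] {G : Type} [Group G]
    (inv : G → G) (σ : G →* Rˣ) (α : MonoidAlgebra R G) : MonoidAlgebra R G :=
  MonoidAlgebra.ofCoeff (α.coeff.sum fun x a => Finsupp.single (inv x) ((σ x : R) * a))

/-- The set of skew-symmetric elements of RG under σ*. -/
def skewSet {R : Type} [CommRing R] {G : Type} [Group G]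
    (inv : G → G) (σ : G →* Rˣ) : Set (MonoidAlgebra R G) :=
  {α | sigmaStar inv σ α = -α}

/-- G is an LC-group: whenever two elements commute, one of x, y, xy is central. -/
def IsLCGroup (G : Type) [Group G] : Prop :=
  ∀ x y : G, x * y = y * x →
    x ∈ Subgroup.center G ∨ y ∈ Subgroup.center G ∨ x * y ∈ Subgroup.center G

/-- G is an SLC-group (nonabelian LC-group with a unique nontrivial commutator s)
and `inv` is its canonical involution. -/
def IsSLCWithCanonical (G : Type) [Group G] (inv : G → G) : Prop :=
  (¬ ∀ a b : G, a * b = b * a) ∧ IsLCGroup G ∧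
  ∃ s : G, s ≠ 1 ∧ (commutator G : Set G) = {1, s} ∧
    (∀ x : G, x ∈ Subgroup.center G → inv x = x) ∧
    (∀ x : G, x ∉ Subgroup.center G → inv x = s * x)

open scoped commutatorElement

/-!
Write `g* = inv g`, `α_g = g - σ(g) g*` and `t(g) = g* g⁻¹`, so that `g* = t(g) g`.
Comparing coefficients in `α_g α_g + α_g α_g = 0` gives `g g* = g* g` and `g² = g*²`, hence
`t(g)` is a `*`-fixed involution commuting with `g`; two more coefficient comparisons show that
`*`-fixed elements are central. Then `α_g = (1 - σ(g) t(g)) g` with `t(g)` central, and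
`α_g α_h + α_h α_g = (1 - σ(g) t(g)) (1 - σ(h) t(h)) (gh + hg)`. Reading off one or two
coefficients of this product forces `t(g) = t(h)` for all non-fixed `g, h`. Calling this common
value `s`, we get `g* = s g` off the centre, which makes `s` the only nontrivial commutator.
-/

section SLC

variable {G : Type} [Group G] {inv : G → G} {s : G}

lemma coe_zpowers_of_mul_self_eq_one (hss : s * s = 1) :
    (Subgroup.zpowers s : Set G) = {1, s} := by
  ext x
  constructor
  · rintro ⟨k, rfl⟩
    rcases Int.even_or_odd' k with ⟨m, rfl | rfl⟩ <;> simp [zpow_add, zpow_mul, sq, hss]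
  · rintro (rfl | rfl)
    exacts [Subgroup.one_mem _, Subgroup.mem_zpowers _]

lemma notMem_center_of_mul_ne {x y : G} (h : x * y ≠ y * x) : x ∉ Subgroup.center G :=
  fun hx => h (Subgroup.mem_center_iff.mp hx y).symm

lemma inv_mul_eq_mul_of_notMem_center (hmul : ∀ x y : G, inv (x * y) = inv y * inv x)
    (hs : s ∈ Subgroup.center G) (hss : s * s = 1)
    (hnc : ∀ x ∉ Subgroup.center G, inv x = s * x) {x y : G}
    (hx : x ∉ Subgroup.center G) (hy : y ∉ Subgroup.center G) : inv (x * y) = y * x := by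
  rw [hmul, hnc x hx, hnc y hy, mul_assoc, ← mul_assoc y, Subgroup.mem_center_iff.mp hs y,
    mul_assoc, ← mul_assoc, hss, one_mul]

lemma commutatorElement_eq_of_mul_ne (hmul : ∀ x y : G, inv (x * y) = inv y * inv x)
    (hs : s ∈ Subgroup.center G) (hss : s * s = 1)
    (hnc : ∀ x ∉ Subgroup.center G, inv x = s * x) {x y : G} (h : x * y ≠ y * x) :
    ⁅x, y⁆ = s := by
  have hxy : x * y ∉ Subgroup.center G := fun hc =>
    h (mul_left_cancel ((Subgroup.mem_center_iff.mp hc x).trans (mul_assoc x y x)))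
  have hyx : y * x = s * (x * y) :=
    (inv_mul_eq_mul_of_notMem_center hmul hs hss hnc (notMem_center_of_mul_ne h)
      (notMem_center_of_mul_ne (Ne.symm h))).symm.trans (hnc _ hxy)
  rw [commutatorElement_def, mul_assoc, ← mul_inv_rev, hyx, mul_inv_rev, mul_inv_cancel_left,
    inv_eq_of_mul_eq_one_right hss]

lemma isSLCWithCanonical_of_eq_mul (hmul : ∀ x y : G, inv (x * y) = inv y * inv x)
    (hnab : ¬∀ a b : G, a * b = b * a) (hs : s ∈ Subgroup.center G) (hss : s * s = 1)
    (hcen : ∀ x, x ∈ Subgroup.center G ↔ inv x = x)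
    (hnc : ∀ x ∉ Subgroup.center G, inv x = s * x) : IsSLCWithCanonical G inv := by
  obtain ⟨a, b, hab⟩ : ∃ a b : G, a * b ≠ b * a := by simpa using hnab
  have hs1 : s ≠ 1 := by
    have ha := notMem_center_of_mul_ne hab
    intro h1
    exact ha ((hcen a).mpr (by rw [hnc a ha, h1, one_mul]))
  refine ⟨hnab, ?_, s, hs1, ?_, fun x hx => (hcen x).mp hx, hnc⟩
  · intro x y hxy
    by_contra! h
    exact h.2.2 ((hcen _).mpr
      ((inv_mul_eq_mul_of_notMem_center hmul hs hss hnc h.1 h.2.1).trans hxy.symm))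
  · refine Set.Subset.antisymm ?_ (Set.pair_subset (Subgroup.one_mem _) ?_)
    · rw [← coe_zpowers_of_mul_self_eq_one hss, SetLike.coe_subset_coe, commutator_def,
        Subgroup.commutator_le]
      intro x _ y _
      by_cases h : x * y = y * x
      · rw [commutatorElement_eq_one_iff_mul_comm.mpr h]
        exact Subgroup.one_mem _
      · rw [commutatorElement_eq_of_mul_ne hmul hs hss hnc h]
        exact Subgroup.mem_zpowers s
    · rw [← commutatorElement_eq_of_mul_ne hmul hs hss hnc hab, commutator_def]
      exact Subgroup.commutator_mem_commutator (Subgroup.mem_top a) (Subgroup.mem_top b)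

end SLC

section GroupRing

variable {R : Type} [CommRing R] {G : Type} [Group G] {inv : G → G} {σ : G →* Rˣ}

noncomputable def skewElt (inv : G → G) (σ : G →* Rˣ) (g : G) : MonoidAlgebra R G :=
  MonoidAlgebra.single g 1 - MonoidAlgebra.single (inv g) (σ g : R)

lemma sigmaStar_single (x : G) (a : R) :
    sigmaStar inv σ (MonoidAlgebra.single x a) =
      MonoidAlgebra.single (inv x) ((σ x : R) * a) := by
  rw [sigmaStar, MonoidAlgebra.coeff_single, Finsupp.sum_single_index (by simp)]
  rfl

lemma sigmaStar_sub (α β : MonoidAlgebra R G) :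
    sigmaStar inv σ (α - β) = sigmaStar inv σ α - sigmaStar inv σ β := by
  simp only [sigmaStar, MonoidAlgebra.coeff_sub]
  rw [Finsupp.sum_sub_index (by simp [mul_sub]), MonoidAlgebra.ofCoeff_sub]

lemma skewElt_mem_skewSet (hinv : ∀ x, inv (inv x) = x) (hcompat : ∀ x, x * inv x ∈ σ.ker)
    (g : G) : skewElt inv σ g ∈ skewSet inv σ := by
  have hσ : (σ (inv g) : R) * σ g = 1 := by
    rw [← Units.val_mul, mul_comm, ← map_mul, hcompat g, Units.val_one]
  simp only [skewSet, Set.mem_ofPred_eq, skewElt, sigmaStar_sub, sigmaStar_single, hinv, hσ,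
    mul_one]
  abel

lemma skewElt_mul_skewElt (g h : G) :
    skewElt inv σ g * skewElt (R := R) inv σ h =
      MonoidAlgebra.single (g * h) 1 - MonoidAlgebra.single (g * inv h) (σ h : R)
        - MonoidAlgebra.single (inv g * h) (σ g : R)
        + MonoidAlgebra.single (inv g * inv h) ((σ g : R) * σ h) := by
  simp only [skewElt, sub_mul, mul_sub, MonoidAlgebra.single_mul_single, one_mul, mul_one]
  abel

def SkewEltsAnticommute (inv : G → G) (σ : G →* Rˣ) : Prop :=
  ∀ g h : G,
    skewElt inv σ g * skewElt (R := R) inv σ h + skewElt inv σ h * skewElt inv σ g = 0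

lemma mul_self_eq_inv_mul_inv (hα : SkewEltsAnticommute inv σ) (h2 : (2 : R) ≠ 0) (g : G) :
    g * g = inv g * inv g := by
  by_contra hne
  have hg : inv g ≠ g := fun h => hne (by rw [h])
  have key : (1 : R) + 1 = 0 := by
    simpa [skewElt_mul_skewElt, hg, Ne.symm hne] using congrArg (·.coeff (g * g)) (hα g g)
  exact h2 (by linear_combination key)

lemma commute_inv_self (hα : SkewEltsAnticommute inv σ) (h2 : (2 : R) ≠ 0) (g : G) :
    Commute g (inv g) := by
  by_contra hne
  have hg : inv g ≠ g := fun h => hne (by rw [h])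
  have key : -(σ g : R) + -(σ g) = 0 := by
    simpa [skewElt_mul_skewElt, hg, Ne.symm hg, Ne.symm hne]
      using congrArg (·.coeff (g * inv g)) (hα g g)
  exact h2 ((σ g).mul_left_eq_zero.mp (by linear_combination -key))

end GroupRing

section Twist

variable {R : Type} [CommRing R] {G : Type} [Group G] {inv : G → G} {σ : G →* Rˣ}

lemma map_one_of_antimul (hmul : ∀ x y : G, inv (x * y) = inv y * inv x) : inv 1 = 1 := by
  simpa using (hmul 1 1).symm

lemma map_inv_of_antimul (hmul : ∀ x y : G, inv (x * y) = inv y * inv x) (g : G) :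
    inv g⁻¹ = (inv g)⁻¹ := by
  rw [eq_inv_iff_mul_eq_one, ← hmul, mul_inv_cancel, map_one_of_antimul hmul]

def twist (inv : G → G) (g : G) : G := inv g * g⁻¹

lemma twist_mul_self (g : G) : twist inv g * g = inv g := inv_mul_cancel_right _ _

lemma twist_eq_one_iff {g : G} : twist inv g = 1 ↔ inv g = g := mul_inv_eq_one

lemma commute_twist_self (hα : SkewEltsAnticommute inv σ) (h2 : (2 : R) ≠ 0) (g : G) :
    Commute (twist inv g) g :=
  (commute_inv_self hα h2 g).symm.mul_left (Commute.refl g).inv_left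

lemma twist_mul_twist (hα : SkewEltsAnticommute inv σ) (h2 : (2 : R) ≠ 0) (g : G) :
    twist inv g * twist inv g = 1 := by
  have hc := (commute_inv_self hα h2 g).inv_left
  rw [twist, mul_assoc, ← mul_assoc g⁻¹, hc.eq, mul_assoc, ← mul_assoc,
    ← mul_self_eq_inv_mul_inv hα h2, ← mul_inv_rev, mul_inv_cancel]

lemma inv_twist (hmul : ∀ x y : G, inv (x * y) = inv y * inv x) (hinv : ∀ x, inv (inv x) = x)
    (hα : SkewEltsAnticommute inv σ) (h2 : (2 : R) ≠ 0) (g : G) :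
    inv (twist inv g) = twist inv g := by
  rw [twist, hmul, hinv, map_inv_of_antimul hmul, inv_mul_eq_iff_eq_mul, ← mul_assoc,
    eq_mul_inv_iff_mul_eq, mul_self_eq_inv_mul_inv hα h2]

noncomputable def skewFactor (inv : G → G) (σ : G →* Rˣ) (g : G) : MonoidAlgebra R G :=
  1 - MonoidAlgebra.single (twist inv g) (σ g : R)

lemma skewElt_eq_skewFactor_mul (g : G) :
    skewElt inv σ g = skewFactor (R := R) inv σ g * MonoidAlgebra.single g 1 := by
  simp [skewElt, skewFactor, sub_mul, MonoidAlgebra.single_mul_single, twist_mul_self]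

lemma skewFactor_commute {g : G} (hcen : ∀ x, Commute (twist inv g) x) (y : MonoidAlgebra R G) :
    Commute (skewFactor inv σ g) y :=
  (Commute.one_left y).sub_left (MonoidAlgebra.single_commute hcen (fun _ => .all _ _) y)

lemma skewFactor_mul_skewFactor (g h : G) :
    skewFactor inv σ g * skewFactor (R := R) inv σ h =
      1 - MonoidAlgebra.single (twist inv g) (σ g : R)
        - MonoidAlgebra.single (twist inv h) (σ h : R)
        + MonoidAlgebra.single (twist inv g * twist inv h) ((σ g : R) * σ h) := by
  simp only [skewFactor, sub_mul, mul_sub, one_mul, mul_one, MonoidAlgebra.single_mul_single]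
  abel

end Twist

structure SkewAnticommSetting {R : Type} [CommRing R] {G : Type} [Group G]
    (inv : G → G) (σ : G →* Rˣ) : Prop where
  antimul : ∀ x y : G, inv (x * y) = inv y * inv x
  involutive : ∀ x, inv (inv x) = x
  anticomm : SkewEltsAnticommute inv σ
  two_ne_zero : (2 : R) ≠ 0
  fixed_commute : ∀ x y : G, inv x = x → inv y = y → x * y = y * x

namespace SkewAnticommSetting

variable {R : Type} [CommRing R] {G : Type} [Group G] {inv : G → G} {σ : G →* Rˣ}
variable (H : SkewAnticommSetting inv σ)
include H

lemma commute_of_inv_eq_self {c : G} (hc : inv c = c) (g : G) : Commute c g := by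
  by_cases hg : inv g = g
  · exact H.fixed_commute c g hc hg
  by_contra hne
  change c * g ≠ g * c at hne
  set p := twist inv g
  have hp1 : p ≠ 1 := mt twist_eq_one_iff.mp hg
  have hgp : inv g = p * g := (twist_mul_self g).symm
  have hpg : Commute g p := (commute_twist_self H.anticomm H.two_ne_zero g).symm
  have hcp : Commute c p :=
    H.fixed_commute c p hc (inv_twist H.antimul H.involutive H.anticomm H.two_ne_zero g)
  have hcg : inv (c * g) = p * (g * c) := by rw [H.antimul, hc, hgp, mul_assoc]
  have hcg_ne : c * g ≠ p * (g * c) := fun h => hne (mul_left_cancel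
    ((H.fixed_commute c (c * g) hc (hcg.trans h.symm)).trans (mul_assoc c g c)))
  -- The coefficient at `c g` gives `σ c = 1`, the one at `t(g) g c g` gives `σ c = -1`.
  have key1 : 1 - (σ c : R) = 0 := by
    simpa [skewElt_mul_skewElt, hc, hgp, mul_assoc, hp1, Ne.symm hne, hcg_ne]
      using congrArg (·.coeff (c * g)) (H.anticomm c g)
  have h_gpgc : g * (p * (g * c)) ≠ p * (g * (c * g)) := by
    rw [hpg.left_comm]
    simpa using Ne.symm hne
  have h_cgg : c * (g * g) ≠ p * (g * (c * g)) := fun h =>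
    hcg_ne (mul_right_cancel (b := g) (by simpa [mul_assoc] using h))
  have h_cgpg : c * (g * (p * g)) ≠ p * (g * (c * g)) := by
    rw [hpg.left_comm, hcp.left_comm]
    simpa using fun h => hne (mul_right_cancel (b := g) (by simpa [mul_assoc] using h))
  have key2 : -(σ g : R) + -(σ c * σ g) = 0 := by
    simpa [skewElt_mul_skewElt, hgp, hcg, mul_assoc, hp1, hcg_ne.symm, h_gpgc, h_cgg, h_cgpg]
      using congrArg (·.coeff (p * (g * (c * g)))) (H.anticomm g (c * g))
  exact H.two_ne_zero ((σ g).mul_left_eq_zero.mp (by linear_combination -key2 + σ g * key1))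

lemma mem_center_of_inv_eq_self {c : G} (hc : inv c = c) : c ∈ Subgroup.center G :=
  Subgroup.mem_center_iff.mpr fun x => (H.commute_of_inv_eq_self hc x).eq.symm

lemma commute_twist (g x : G) : Commute (twist inv g) x :=
  H.commute_of_inv_eq_self (inv_twist H.antimul H.involutive H.anticomm H.two_ne_zero g) x

lemma twist_mul (g h : G) : twist inv (g * h) = twist inv g * twist inv h * ⁅h, g⁆ := by
  rw [twist, H.antimul, ← twist_mul_self (inv := inv) g, ← twist_mul_self (inv := inv) h,
    commutatorElement_def]
  simp only [mul_assoc, fun x y => (H.commute_twist g x).symm.left_comm y]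
  group

lemma coeff_skewFactor_add_coeff_mul_commutator (g h w : G) :
    (skewFactor inv σ g * skewFactor inv σ h).coeff w
      + (skewFactor inv σ g * skewFactor (R := R) inv σ h).coeff (w * ⁅g, h⁆) = 0 := by
  have hu (x : G) := skewFactor_commute (R := R) (σ := σ) (H.commute_twist x)
  have hgh : skewFactor inv σ g * MonoidAlgebra.single g 1 *
      (skewFactor inv σ h * MonoidAlgebra.single h 1) =
      skewFactor inv σ g * skewFactor (R := R) inv σ h * MonoidAlgebra.single (g * h) 1 := by
    rw [mul_assoc, (hu h _).symm.left_comm, MonoidAlgebra.single_mul_single, one_mul, mul_assoc]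
  have hhg : skewFactor inv σ h * MonoidAlgebra.single h 1 *
      (skewFactor inv σ g * MonoidAlgebra.single g 1) =
      skewFactor inv σ g * skewFactor (R := R) inv σ h * MonoidAlgebra.single (h * g) 1 := by
    rw [mul_assoc, (hu g _).symm.left_comm, MonoidAlgebra.single_mul_single, one_mul, ← mul_assoc,
      (hu h _).eq]
  have hX : skewFactor inv σ g * skewFactor (R := R) inv σ h *
      (MonoidAlgebra.single (g * h) 1 + MonoidAlgebra.single (h * g) 1) = 0 := by
    rw [mul_add, ← hgh, ← hhg, ← skewElt_eq_skewFactor_mul, ← skewElt_eq_skewFactor_mul]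
    exact H.anticomm g h
  have hcoeff := congrArg (·.coeff (w * (g * h))) hX
  rw [mul_add, MonoidAlgebra.coeff_add, Finsupp.add_apply, MonoidAlgebra.coeff_mul_single_apply,
    MonoidAlgebra.coeff_mul_single_apply, mul_inv_cancel_right,
    show w * (g * h) * (h * g)⁻¹ = w * ⁅g, h⁆ by rw [commutatorElement_def]; group] at hcoeff
  simpa using hcoeff

lemma twist_eq_of_commute {g h : G} (hg : inv g ≠ g) (hh : inv h ≠ h) (hc : Commute g h) :
    twist inv g = twist inv h := by
  by_contra hpq
  have hp1 : twist inv g ≠ 1 := mt twist_eq_one_iff.mp hg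
  have hq1 : twist inv h ≠ 1 := mt twist_eq_one_iff.mp hh
  have hpq1 : twist inv g * twist inv h ≠ 1 := fun h1 =>
    hpq (mul_left_cancel ((twist_mul_twist H.anticomm H.two_ne_zero g).trans h1.symm))
  have key : (1 : R) + 1 = 0 := by
    have hcoeff := H.coeff_skewFactor_add_coeff_mul_commutator g h 1
    rw [commutatorElement_eq_one_iff_commute.mpr hc, mul_one, skewFactor_mul_skewFactor] at hcoeff
    simpa [hp1.symm, hq1.symm, hpq1.symm] using hcoeff
  exact H.two_ne_zero (by linear_combination key)

-- The coefficient at `1` forces `σ g = 1`; then `h` and `g h` have the same twist `t(h)` and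
-- commutator `t(g)`, and the coefficient of their factored anticommutator at `t(h)` is `-2 σ(h)`.
lemma false_of_commutator_eq_twist {g h : G} (hg : inv g ≠ g) (hpq : twist inv g ≠ twist inv h)
    (he : ⁅g, h⁆ = twist inv g) : False := by
  set p := twist inv g with hp
  set q := twist inv h with hq
  have hp1 : p ≠ 1 := mt twist_eq_one_iff.mp hg
  have hq1 : q ≠ 1 := fun hq_one => hp1 <| he ▸ commutatorElement_eq_one_iff_commute.mpr
    (H.commute_of_inv_eq_self (twist_eq_one_iff.mp hq_one) g).symm
  have hpp : p * p = 1 := twist_mul_twist H.anticomm H.two_ne_zero g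
  have hqq : q * q = 1 := twist_mul_twist H.anticomm H.two_ne_zero h
  have hpq1 : p * q ≠ 1 := fun h1 => hpq (mul_left_cancel (hpp.trans h1.symm))
  have hqp1 : q * p ≠ 1 := fun h1 => hpq (mul_left_cancel (h1.trans hqq.symm))
  have hσg : (σ g : R) = 1 := by
    have hcoeff := H.coeff_skewFactor_add_coeff_mul_commutator g h 1
    rw [one_mul, he, skewFactor_mul_skewFactor, ← hp, ← hq] at hcoeff
    have key : 1 + -(σ g : R) = 0 := by
      simpa [MonoidAlgebra.one_def, hp1.symm, hq1.symm, hpq1.symm, hpq.symm, hq1] using hcoeff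
    linear_combination -key
  have hhg : ⁅h, g⁆ = p := by
    rw [← commutatorElement_inv, he, inv_eq_of_mul_eq_one_right hpp]
  have htw : twist inv (g * h) = q := by
    rw [H.twist_mul, ← hp, ← hq, hhg, (H.commute_twist h p).right_comm, hpp, one_mul]
  have hcomm : ⁅h, g * h⁆ = p := by
    rw [← hhg, commutatorElement_def, commutatorElement_def]
    group
  have hσgh : (σ (g * h) : R) = σ h := by rw [map_mul, Units.val_mul, hσg, one_mul]
  have hcoeff := H.coeff_skewFactor_add_coeff_mul_commutator h (g * h) q
  rw [hcomm, skewFactor_mul_skewFactor, htw, hσgh, ← hq, hqq] at hcoeff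
  have key : -(σ h : R) - σ h = 0 := by
    simpa [MonoidAlgebra.one_def, hq1.symm, hq1, hpq, hp1, Ne.symm hpq, hqp1.symm] using hcoeff
  exact H.two_ne_zero ((σ h).mul_left_eq_zero.mp (by linear_combination -key))

lemma twist_eq_of_not_commute {g h : G} (hc : ¬Commute g h) : twist inv g = twist inv h := by
  have hg : inv g ≠ g := fun e => hc (H.commute_of_inv_eq_self e h)
  have hh : inv h ≠ h := fun e => hc (H.commute_of_inv_eq_self e g).symm
  by_contra hpq
  -- The coefficient at `1` is `1` unless `⁅g, h⁆` is `t(g)`, `t(h)` or `t(g) t(h)`.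
  by_cases hep : ⁅g, h⁆ = twist inv g
  · exact H.false_of_commutator_eq_twist hg hpq hep
  by_cases heq : ⁅g, h⁆ = twist inv h
  · refine H.false_of_commutator_eq_twist hh (Ne.symm hpq) ?_
    rw [← commutatorElement_inv, heq,
      inv_eq_of_mul_eq_one_right (twist_mul_twist H.anticomm H.two_ne_zero h)]
  by_cases hepq : ⁅g, h⁆ = twist inv g * twist inv h
  · have hgh : inv (g * h) = g * h := twist_eq_one_iff.mp <| by
      rw [H.twist_mul, ← commutatorElement_inv, hepq, mul_inv_cancel]
    exact hc (mul_left_cancel ((H.commute_of_inv_eq_self hgh g).eq.symm.trans (mul_assoc g h g)))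
  have hp1 : twist inv g ≠ 1 := mt twist_eq_one_iff.mp hg
  have hq1 : twist inv h ≠ 1 := mt twist_eq_one_iff.mp hh
  have hpq1 : twist inv g * twist inv h ≠ 1 := fun h1 =>
    hpq (mul_left_cancel ((twist_mul_twist H.anticomm H.two_ne_zero g).trans h1.symm))
  have he1 : ⁅g, h⁆ ≠ 1 := mt commutatorElement_eq_one_iff_commute.mp hc
  have key : (1 : R) = 0 := by
    have hcoeff := H.coeff_skewFactor_add_coeff_mul_commutator g h 1
    rw [one_mul, skewFactor_mul_skewFactor] at hcoeff
    simpa [MonoidAlgebra.one_def, hp1.symm, hq1.symm, hpq1.symm, he1.symm, Ne.symm hep,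
      Ne.symm heq, Ne.symm hepq] using hcoeff
  exact H.two_ne_zero (by linear_combination 2 * key)

lemma twist_eq_twist {g h : G} (hg : inv g ≠ g) (hh : inv h ≠ h) :
    twist inv g = twist inv h := by
  by_cases hc : Commute g h
  · exact H.twist_eq_of_commute hg hh hc
  · exact H.twist_eq_of_not_commute hc

lemma inv_eq_self_of_mem_center (hnab : ¬∀ a b : G, a * b = b * a) {z : G}
    (hz : z ∈ Subgroup.center G) : inv z = z := by
  by_contra hzf
  suffices ∀ y, y ∈ Subgroup.center G from hnab fun a b => Subgroup.mem_center_iff.mp (this b) a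
  intro y
  by_cases hy : inv y = y
  · exact H.mem_center_of_inv_eq_self hy
  have hyz : inv (y * z) = y * z := twist_eq_one_iff.mp <| by
    rw [H.twist_mul, H.twist_eq_twist hy hzf, twist_mul_twist H.anticomm H.two_ne_zero, one_mul,
      commutatorElement_eq_one_iff_mul_comm, Subgroup.mem_center_iff.mp hz]
  simpa using Subgroup.mul_mem _ (H.mem_center_of_inv_eq_self hyz) (Subgroup.inv_mem _ hz)

end SkewAnticommSetting

theorem stmt13 {R : Type} [CommRing R] (hchar : ringChar R ≠ 2) {G : Type} [Group G]
    (inv : G → G) (hmul : ∀ x y : G, inv (x * y) = inv y * inv x)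
    (hinv : ∀ x : G, inv (inv x) = x) (σ : G →* Rˣ) (hnt : σ ≠ 1)
    (hcompat : ∀ x : G, x * inv x ∈ σ.ker)
    (hanti : ∀ α ∈ skewSet inv σ, ∀ β ∈ skewSet inv σ, α * β + β * α = 0)
    (hfix : ∀ x y : G, inv x = x → inv y = y → x * y = y * x) :
    (∀ a b : G, a * b = b * a) ∨ IsSLCWithCanonical G inv := by
  have : Nontrivial R := by
    by_contra hR
    rw [not_nontrivial_iff_subsingleton] at hR
    exact hnt (MonoidHom.ext fun _ => Subsingleton.elim _ _)
  have H : SkewAnticommSetting inv σ :=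
    ⟨hmul, hinv, fun g h => hanti _ (skewElt_mem_skewSet hinv hcompat g) _
      (skewElt_mem_skewSet hinv hcompat h), Ring.two_ne_zero hchar, hfix⟩
  by_cases hab : ∀ a b : G, a * b = b * a
  · exact Or.inl hab
  obtain ⟨a, ha⟩ : ∃ a : G, inv a ≠ a := by
    by_contra! h
    exact hab fun x y => (H.commute_of_inv_eq_self (h x) y).eq
  refine Or.inr (isSLCWithCanonical_of_eq_mul hmul hab (s := twist inv a) ?_
    (twist_mul_twist H.anticomm H.two_ne_zero a) ?_ ?_)
  · exact Subgroup.mem_center_iff.mpr fun x => (H.commute_twist a x).eq.symm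
  · exact fun x => ⟨H.inv_eq_self_of_mem_center hab, H.mem_center_of_inv_eq_self⟩
  · intro x hx
    have hxf : inv x ≠ x := fun h => hx (H.mem_center_of_inv_eq_self h)
    rw [← H.twist_eq_twist hxf ha, twist_mul_self]
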